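/- For f with L-Lipschitz gradient, g proper closed convex, and μ > 0, the generalized gradient map satisfies the subgradient inequality 0 ≤ μ‖G_μ(x)‖² ≤ g(x) − g(prox_{μg}(x − μ∇f(x))) + μ⟨∇f(x), G_μ(x)⟩ for all x. -/

import Mathlib

open InnerProductSpace

/-- The subdifferential of a convex function `g`. -/
def subdiff {n : ℕ} (g : EuclideanSpace ℝ (Fin n) → ℝ)
    (x : EuclideanSpace ℝ (Fin n)) : Set (EuclideanSpace ℝ (Fin n)) :=
  {z | ∀ y, g y ≥ g x + ⟪z, y - x⟫_ℝ}

/-! The direction `d` stands for `∇f(x)`, and `P` for `prox_{μg}`, encoded through its optimality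
condition `P v = u ↔ (v - u) / μ ∈ ∂g(u)`. -/

namespace ProxGrad

variable {n : ℕ} {g : EuclideanSpace ℝ (Fin n) → ℝ} {μ : ℝ}
  {P : EuclideanSpace ℝ (Fin n) → EuclideanSpace ℝ (Fin n)}

theorem inner_le_sub_of_mem_subdiff {z u : EuclideanSpace ℝ (Fin n)} (hz : z ∈ subdiff g u)
    (x : EuclideanSpace ℝ (Fin n)) : ⟪z, x - u⟫_ℝ ≤ g x - g u := by
  linarith [hz x]

/-- The generalized gradient map `G_μ(x) = (x - prox_{μg}(x - μ d)) / μ`. -/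
noncomputable def gradientMap (μ : ℝ) (P : EuclideanSpace ℝ (Fin n) → EuclideanSpace ℝ (Fin n))
    (d x : EuclideanSpace ℝ (Fin n)) : EuclideanSpace ℝ (Fin n) :=
  (1 / μ) • (x - P (x - μ • d))

theorem sub_prox_eq_smul_gradientMap (hμ : μ ≠ 0) (d x : EuclideanSpace ℝ (Fin n)) :
    x - P (x - μ • d) = μ • gradientMap μ P d x := by
  rw [gradientMap, smul_smul, mul_one_div_cancel hμ, one_smul]

theorem gradientMap_sub_mem_subdiff (hμ : μ ≠ 0)
    (hP : ∀ v u, P v = u ↔ (1 / μ) • (v - u) ∈ subdiff g u) (d x : EuclideanSpace ℝ (Fin n)) :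
    gradientMap μ P d x - d ∈ subdiff g (P (x - μ • d)) := by
  have hprox := (hP (x - μ • d) _).mp rfl
  rwa [sub_right_comm, smul_sub, smul_smul, one_div_mul_cancel hμ, one_smul] at hprox

theorem mul_norm_sq_gradientMap_le (hμ : μ ≠ 0)
    (hP : ∀ v u, P v = u ↔ (1 / μ) • (v - u) ∈ subdiff g u) (d x : EuclideanSpace ℝ (Fin n)) :
    μ * ‖gradientMap μ P d x‖ ^ 2 ≤
      g x - g (P (x - μ • d)) + μ * ⟪d, gradientMap μ P d x⟫_ℝ := by
  set G := gradientMap μ P d x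
  have hsubgrad := inner_le_sub_of_mem_subdiff (gradientMap_sub_mem_subdiff hμ hP d x) x
  have hinner : ⟪G - d, μ • G⟫_ℝ = μ * ‖G‖ ^ 2 - μ * ⟪d, G⟫_ℝ := by
    rw [inner_sub_left, real_inner_smul_right, real_inner_smul_right, real_inner_self_eq_norm_sq]
  rw [sub_prox_eq_smul_gradientMap hμ, hinner] at hsubgrad
  linarith

end ProxGrad

theorem stmt19_general (n : ℕ) (f g : EuclideanSpace ℝ (Fin n) → ℝ) (μ : ℝ)
    (hμ : 0 < μ)
    (P : EuclideanSpace ℝ (Fin n) → EuclideanSpace ℝ (Fin n))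
    (hP : ∀ v u : EuclideanSpace ℝ (Fin n),
      P v = u ↔ (1 / μ) • (v - u) ∈ subdiff g u) :
    ∀ x : EuclideanSpace ℝ (Fin n),
      0 ≤ μ * ‖(1 / μ) • (x - P (x - μ • gradient f x))‖ ^ 2 ∧
      μ * ‖(1 / μ) • (x - P (x - μ • gradient f x))‖ ^ 2 ≤
        g x - g (P (x - μ • gradient f x)) +
          μ * ⟪gradient f x, (1 / μ) • (x - P (x - μ • gradient f x))⟫_ℝ :=
  fun x => ⟨by positivity, ProxGrad.mul_norm_sq_gradientMap_le hμ.ne' hP (gradient f x) x⟩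

theorem stmt19 (n : ℕ) (f g : EuclideanSpace ℝ (Fin n) → ℝ) (L μ : ℝ)
    (hL : 0 < L) (hμ : 0 < μ)
    (hdiff : Differentiable ℝ f)
    (hlip : ∀ x y : EuclideanSpace ℝ (Fin n),
      ‖gradient f x - gradient f y‖ ≤ L * ‖x - y‖)
    (hg : ConvexOn ℝ Set.univ g)
    (P : EuclideanSpace ℝ (Fin n) → EuclideanSpace ℝ (Fin n))
    (hP : ∀ v u : EuclideanSpace ℝ (Fin n),
      P v = u ↔ (1 / μ) • (v - u) ∈ subdiff g u) :
    ∀ x : EuclideanSpace ℝ (Fin n),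
      0 ≤ μ * ‖(1 / μ) • (x - P (x - μ • gradient f x))‖ ^ 2 ∧
      μ * ‖(1 / μ) • (x - P (x - μ • gradient f x))‖ ^ 2 ≤
        g x - g (P (x - μ • gradient f x)) +
          μ * ⟪gradient f x, (1 / μ) • (x - P (x - μ • gradient f x))⟫_ℝ :=
  stmt19_general n f g μ hμ P hP
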